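/- arXiv:1207.2270 — 4 statements merged into one kernel-verified Lean document; each statement's English description precedes it below -/
import Mathlib

section
/- Let D = y ∂/∂x + (1/2) ∂²/∂y² be the generator of the Kolmogorov diffusion. The function h(x,y) defined for x>0, y≥0 by h(x,y) = (2/9)^{1/6} (y/x^{1/6}) U(1/6, 4/3, 2y³/(9x)), where U is the confluent hypergeometric function of the second kind, satisfies D h = 0 on the region {x>0, y>0}. -/
/-!
With the similarity variable `s = 2y³/(9x)` one has `∂ₓs = -s/x` and `∂ᵧs = 3s/y`, so for
`P = y x^(-1/6) U(s)` the chain rule gives `y ∂ₓP = -(9s/(2y x^(1/6))) (U/6 + s U')`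
and `½ ∂ᵧ²P = (9s/(2y x^(1/6))) (4/3 U' + s U'')`. Hence `D P = (9s/(2y x^(1/6)))` times the
Kummer expression `s U'' + (4/3 - s) U' - U/6`, which vanishes; `h` is a constant multiple of `P`.
-/

open Filter Topology

noncomputable def kummerArg (x y : ℝ) : ℝ := 2 * y ^ 3 / (9 * x)

noncomputable def kolmogorovProfile (U : ℝ → ℝ) (x y : ℝ) : ℝ :=
  y / x ^ ((1 : ℝ) / 6) * U (kummerArg x y)

theorem hasDerivAt_kummerArg_fst {x : ℝ} (y : ℝ) (hx : x ≠ 0) :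
    HasDerivAt (fun x' => kummerArg x' y) (-kummerArg x y / x) x := by
  have h9x : HasDerivAt (fun x' : ℝ => 9 * x') 9 x := by
    simpa using (hasDerivAt_id x).const_mul (9 : ℝ)
  refine ((h9x.inv (by positivity)).const_mul (2 * y ^ 3)).congr_deriv ?_
    |>.congr_of_eventuallyEq ?_
  · unfold kummerArg; field_simp
  · exact Eventually.of_forall fun x' => div_eq_mul_inv _ _

theorem hasDerivAt_kummerArg_snd (x y : ℝ) :
    HasDerivAt (kummerArg x) (3 * kummerArg x y / y) y := by
  refine (((hasDerivAt_pow 3 y).const_mul 2).div_const (9 * x)).congr_deriv ?_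
  unfold kummerArg
  rcases eq_or_ne y 0 with rfl | hy
  · simp
  · field_simp; ring

variable {U : ℝ → ℝ}

theorem hasDerivAt_kolmogorovProfile_fst {x : ℝ} (y : ℝ) (hx : 0 < x)
    (hU : DifferentiableAt ℝ U (kummerArg x y)) :
    HasDerivAt (fun x' => kolmogorovProfile U x' y)
      (-(y / x ^ ((1 : ℝ) / 6) / x) *
        (U (kummerArg x y) / 6 + kummerArg x y * deriv U (kummerArg x y))) x := by
  have hroot : HasDerivAt (fun x' : ℝ => x' ^ ((1 : ℝ) / 6))
      ((1 : ℝ) / 6 * x ^ ((1 : ℝ) / 6 - 1)) x :=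
    Real.hasDerivAt_rpow_const (Or.inl hx.ne')
  have hroot_pos : 0 < x ^ ((1 : ℝ) / 6) := Real.rpow_pos_of_pos hx _
  have hprefactor := (hasDerivAt_const x y).div hroot hroot_pos.ne'
  have hUs := hU.hasDerivAt.comp x (hasDerivAt_kummerArg_fst y hx.ne')
  refine (hprefactor.mul hUs).congr_deriv ?_
  simp only [Function.comp_apply, Pi.div_apply]
  rw [Real.rpow_sub hx, Real.rpow_one]
  field_simp
  ring

theorem hasDerivAt_kolmogorovProfile_snd (x : ℝ) {y : ℝ} (hy : y ≠ 0)
    (hU : DifferentiableAt ℝ U (kummerArg x y)) :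
    HasDerivAt (kolmogorovProfile U x)
      ((U (kummerArg x y) + 3 * kummerArg x y * deriv U (kummerArg x y)) / x ^ ((1 : ℝ) / 6))
      y := by
  have hUs := hU.hasDerivAt.comp y (hasDerivAt_kummerArg_snd x y)
  refine (((hasDerivAt_id y).div_const (x ^ ((1 : ℝ) / 6))).mul hUs).congr_deriv ?_
  simp only [Function.comp_apply, id_eq]
  field_simp

theorem hasDerivAt_deriv_kolmogorovProfile_snd (x : ℝ) {y : ℝ} (hy : y ≠ 0)
    (hU : ContDiffAt ℝ 2 U (kummerArg x y)) :
    HasDerivAt (deriv (kolmogorovProfile U x))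
      ((12 * kummerArg x y * deriv U (kummerArg x y)
        + 9 * kummerArg x y ^ 2 * deriv (deriv U) (kummerArg x y)) / (x ^ ((1 : ℝ) / 6) * y))
      y := by
  have hs := hasDerivAt_kummerArg_snd x y
  have hU_near : ∀ᶠ y' in 𝓝 y, y' ≠ 0 ∧ DifferentiableAt ℝ U (kummerArg x y') :=
    (eventually_ne_nhds hy).and <| hs.continuousAt.tendsto.eventually <|
      (hU.eventually (by simp)).mono fun _ h => h.differentiableAt (by norm_num)
  have hderiv_eq : deriv (kolmogorovProfile U x) =ᶠ[𝓝 y] fun y' =>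
      (U (kummerArg x y') + 3 * kummerArg x y' * deriv U (kummerArg x y')) / x ^ ((1 : ℝ) / 6) :=
    hU_near.mono fun y' ⟨hy', hUy'⟩ => (hasDerivAt_kolmogorovProfile_snd x hy' hUy').deriv
  have hU' : HasDerivAt (deriv U) (deriv (deriv U) (kummerArg x y)) (kummerArg x y) :=
    ((hU.derivWithin (m := 1) (by norm_num)).differentiableAt one_ne_zero).hasDerivAt
  have hU1 := (hU.differentiableAt (by norm_num)).hasDerivAt.comp y hs
  have hU2 := hU'.comp y hs
  refine ((hU1.add ((hs.const_mul 3).mul hU2)).div_const _).congr_deriv ?_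
    |>.congr_of_eventuallyEq hderiv_eq
  simp only [Function.comp_apply]
  field_simp
  ring

theorem kolmogorovProfile_harmonic {x y : ℝ} (hx : 0 < x) (hy : y ≠ 0)
    (hU : ContDiffAt ℝ 2 U (kummerArg x y))
    (hKummer : kummerArg x y * deriv (deriv U) (kummerArg x y)
      + (4 / 3 - kummerArg x y) * deriv U (kummerArg x y) - 1 / 6 * U (kummerArg x y) = 0) :
    y * deriv (fun x' => kolmogorovProfile U x' y) x
      + 1 / 2 * deriv (deriv (kolmogorovProfile U x)) y = 0 := by
  rw [(hasDerivAt_kolmogorovProfile_fst y hx (hU.differentiableAt (by norm_num))).deriv,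
    (hasDerivAt_deriv_kolmogorovProfile_snd x hy hU).deriv]
  have hy2 : y * y / x = 9 * kummerArg x y / (2 * y) := by
    rw [kummerArg]; field_simp
  set s := kummerArg x y
  linear_combination (9 * s / (2 * y * x ^ ((1 : ℝ) / 6))) * hKummer
    - (U s / 6 + s * deriv U s) / x ^ ((1 : ℝ) / 6) * hy2

/-- Let `D = y ∂/∂x + (1/2) ∂²/∂y²` be the generator of the Kolmogorov diffusion.
The function `h(x,y) = (2/9)^(1/6) (y/x^(1/6)) U(1/6, 4/3, 2y³/(9x))`, where `U` is
Tricomi's confluent hypergeometric function (a smooth solution of Kummer's equation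
`s U'' + (b - s) U' - a U = 0` with `a = 1/6`, `b = 4/3` on `(0,∞)`), satisfies
`D h = 0` on the region `{x > 0, y > 0}`. -/
theorem kolmogorov_harmonic_of_kummer (U : ℝ → ℝ)
    (hUsmooth : ∀ s ∈ Set.Ioi (0 : ℝ), ContDiffAt ℝ 2 U s)
    (hKummer : ∀ s > (0 : ℝ),
      s * deriv (deriv U) s + (4 / 3 - s) * deriv U s - (1 / 6) * U s = 0)
    (h : ℝ → ℝ → ℝ)
    (hdef : ∀ x y : ℝ, 0 < x → 0 < y →
      h x y = (2 / 9 : ℝ) ^ ((1 : ℝ) / 6) * (y / x ^ ((1 : ℝ) / 6)) * U (2 * y ^ 3 / (9 * x)))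
    (x y : ℝ) (hx : 0 < x) (hy : 0 < y) :
    y * deriv (fun x' => h x' y) x
      + (1 / 2) * deriv (fun y' => deriv (fun y'' => h x y'') y') y = 0 := by
  set C : ℝ := (2 / 9 : ℝ) ^ ((1 : ℝ) / 6)
  have h_eq : ∀ x' y', 0 < x' → 0 < y' → h x' y' = C * kolmogorovProfile U x' y' := by
    intro x' y' hx' hy'
    rw [hdef x' y' hx' hy', kolmogorovProfile, kummerArg, mul_assoc]
  have hx_eq : (fun x' => h x' y) =ᶠ[𝓝 x] fun x' => C * kolmogorovProfile U x' y :=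
    (eventually_gt_nhds hx).mono fun x' hx' => h_eq x' y hx' hy
  have hy_eq : (fun y' => h x y') =ᶠ[𝓝 y] fun y' => C * kolmogorovProfile U x y' :=
    (eventually_gt_nhds hy).mono fun y' hy' => h_eq x y' hx hy'
  have hs : 0 < kummerArg x y := by unfold kummerArg; positivity
  rw [hx_eq.deriv_eq, hy_eq.deriv.deriv_eq, deriv_const_mul_field', deriv_const_mul_field',
    deriv_const_mul_field']
  linear_combination C * kolmogorovProfile_harmonic hx hy.ne' (hUsmooth _ hs) (hKummer _ hs)
end

section
/- For i ≥ 0, x > 0 and y > 0, the i-th partial derivative of h(x,y) = (2/9)^{1/6} (y/x^{1/6}) U(1/6, 4/3, 2y³/(9x)) with respect to x equals C_i (2/9)^{1/6} (y/x^{1/6+i}) U(1/6+i, 4/3, 2y³/(9x)), where C_0 = 1 and C_{i+1} = −C_i (i+1/6)(i−1/6). -/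
lemma hasDerivAt_aux (U : ℝ → ℝ → ℝ → ℝ)
    (hUsmooth : ∀ a : ℝ, ∀ s ∈ Set.Ioi (0 : ℝ), ContDiffAt ℝ (⊤ : ℕ∞) (U a (4 / 3)) s)
    (hcontig : ∀ a : ℝ, ∀ s > (0 : ℝ),
      a * U a (4 / 3) s + s * deriv (U a (4 / 3)) s
        = a * (a - 4 / 3 + 1) * U (a + 1) (4 / 3) s)
    (a y x : ℝ) (hy : 0 < y) (hx : 0 < x) :
    HasDerivAt (fun x' => y / x' ^ a * U a (4 / 3) (2 * y ^ 3 / (9 * x')))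
      ((-(a * (a - 4 / 3 + 1))) * (y / x ^ (a + 1) * U (a + 1) (4 / 3) (2 * y ^ 3 / (9 * x)))) x := by
  have hxne : x ≠ 0 := hx.ne'
  have hs : (0 : ℝ) < 2 * y ^ 3 / (9 * x) := by positivity
  have hU' : HasDerivAt (U a (4 / 3)) (deriv (U a (4 / 3)) (2 * y ^ 3 / (9 * x)))
      (2 * y ^ 3 / (9 * x)) :=
    ((hUsmooth a _ hs).differentiableAt (by simp)).hasDerivAt
  have hsx : HasDerivAt (fun x' : ℝ => 2 * y ^ 3 / (9 * x')) (2 * y ^ 3 / 9 * (-(x ^ 2)⁻¹)) x := by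
    have h1 : HasDerivAt (fun x' : ℝ => x'⁻¹) (-(x ^ 2)⁻¹) x := hasDerivAt_inv hxne
    have h2 := h1.const_mul (2 * y ^ 3 / 9)
    convert h2 using 2 with t
    · rfl
    · rfl
    · ring
  have hcomp := hU'.comp x hsx
  have hxa : x ^ a ≠ 0 := (Real.rpow_pos_of_pos hx a).ne'
  have hpowd : HasDerivAt (fun x' : ℝ => x' ^ a) (a * x ^ (a - 1)) x :=
    Real.hasDerivAt_rpow_const (Or.inl hxne)
  have hpow := (hasDerivAt_const x y).div hpowd hxa
  have htot := hpow.mul hcomp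
  convert htot using 1
  · rfl
  · rfl
  · rfl
  have hcon := hcontig a _ hs
  have hexp : x ^ (a + 1) = x ^ a * x := by rw [Real.rpow_add hx, Real.rpow_one]
  have hexp2 : x ^ (a - 1) = x ^ a / x := by rw [Real.rpow_sub hx, Real.rpow_one]
  rw [hexp, hexp2,
    show (-(a * (a - 4 / 3 + 1))) * (y / (x ^ a * x) * U (a + 1) (4 / 3) (2 * y ^ 3 / (9 * x)))
      = -(y / (x ^ a * x)) * (a * U a (4 / 3) (2 * y ^ 3 / (9 * x))
        + 2 * y ^ 3 / (9 * x) * deriv (U a (4 / 3)) (2 * y ^ 3 / (9 * x))) from by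
      rw [hcon]; ring]
  simp only [Pi.div_apply, Function.comp_apply]
  field_simp
  ring

/-- For `i ≥ 0`, `x > 0`, `y > 0`, the `i`-th partial derivative in `x` of
`h(x,y) = (2/9)^(1/6) (y/x^(1/6)) U(1/6, 4/3, 2y³/(9x))` equals
`C_i (2/9)^(1/6) (y/x^(1/6+i)) U(1/6+i, 4/3, 2y³/(9x))`, where `C_0 = 1` and
`C_{i+1} = -C_i (i+1/6)(i-1/6)`.  Here `U(a,b,·)` is Tricomi's confluent
hypergeometric function, assumed smooth on `(0,∞)` and satisfying the contiguous
relation (Abramowitz–Stegun 13.4.23)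
`a U(a,b,s) + s U'(a,b,s) = a (a - b + 1) U(a+1,b,s)` for `b = 4/3`. -/
theorem iteratedDeriv_x_of_h (U : ℝ → ℝ → ℝ → ℝ) (Ccoef : ℕ → ℝ)
    (hC0 : Ccoef 0 = 1)
    (hCrec : ∀ i : ℕ, Ccoef (i + 1) = -Ccoef i * ((i : ℝ) + 1 / 6) * ((i : ℝ) - 1 / 6))
    (hUsmooth : ∀ a : ℝ, ∀ s ∈ Set.Ioi (0 : ℝ), ContDiffAt ℝ (⊤ : ℕ∞) (U a (4 / 3)) s)
    (hcontig : ∀ a : ℝ, ∀ s > (0 : ℝ),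
      a * U a (4 / 3) s + s * deriv (U a (4 / 3)) s
        = a * (a - 4 / 3 + 1) * U (a + 1) (4 / 3) s)
    (h : ℝ → ℝ → ℝ)
    (hdef : ∀ x y : ℝ, 0 < x → 0 < y →
      h x y = (2 / 9 : ℝ) ^ ((1 : ℝ) / 6) * (y / x ^ ((1 : ℝ) / 6))
        * U (1 / 6) (4 / 3) (2 * y ^ 3 / (9 * x)))
    (i : ℕ) (x y : ℝ) (hx : 0 < x) (hy : 0 < y) :
    iteratedDeriv i (fun x' => h x' y) x
      = Ccoef i * (2 / 9 : ℝ) ^ ((1 : ℝ) / 6) * (y / x ^ ((1 : ℝ) / 6 + (i : ℝ)))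
        * U (1 / 6 + (i : ℝ)) (4 / 3) (2 * y ^ 3 / (9 * x)) := by
  set K : ℝ := (2 / 9 : ℝ) ^ ((1 : ℝ) / 6) with hK
  induction i generalizing x with
  | zero =>
    simp only [iteratedDeriv_zero, hC0, Nat.cast_zero, add_zero]
    rw [hdef x y hx hy]
    ring
  | succ i ih =>
    rw [iteratedDeriv_succ]
    have hEq : iteratedDeriv i (fun x' => h x' y) =ᶠ[nhds x]
        (fun x' => (Ccoef i * K) * (y / x' ^ ((1 : ℝ) / 6 + (i : ℝ))
          * U (1 / 6 + (i : ℝ)) (4 / 3) (2 * y ^ 3 / (9 * x')))) := by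
      filter_upwards [isOpen_Ioi.mem_nhds hx] with t ht
      rw [ih t ht]; ring
    rw [hEq.deriv_eq]
    have hd := (hasDerivAt_aux U hUsmooth hcontig ((1 : ℝ) / 6 + (i : ℝ)) y x hy hx).const_mul
      (Ccoef i * K)
    rw [hd.deriv]
    rw [hCrec i]
    push_cast
    rw [show (1 : ℝ) / 6 + ((i : ℝ) + 1) = (1 / 6 + (i : ℝ)) + 1 by ring]
    ring
end

section
/- Define α(x,y) = max(|x|^{1/3}, |y|). There exist positive constants c and C such that for all (x,y) ∈ ℝ₊², c √(α(x,y)) ≤ h(x,y) ≤ C √(α(x,y)), where h(x,y) = (2/9)^{1/6} (y/x^{1/6}) U(1/6, 4/3, 2y³/(9x)) for x,y ≥ 0 (with h interpreted by continuity on the boundary). -/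
/-!
The formula for `h` is invariant under the anisotropic dilation `(x, y) ↦ (l³x, ly)` up to the
factor `√l`, and by continuity so is `h` on the closed quadrant. Hence `h / √α` is determined by
its values on the compact arc `{α = 1}`. There `h` is positive: inside the quadrant because `U` is,
and at the two endpoints `(1, 0)` and `(0, 1)` because the asymptotics of `U` at `0` and at `∞`
identify `h(1, 0) = (9/2)^(1/6) Γ(1/3)/Γ(1/6)` and `h(0, 1) = 1`. A positive continuous function on
a compact set lies between two positive constants.
-/

open Real Filter Set Topology

namespace TwoSidedSqrtAlpha

/-- The paper's `α` on the closed quadrant, where `|x| = x` and `|y| = y`. -/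
noncomputable def alpha (x y : ℝ) : ℝ := max (x ^ ((1 : ℝ) / 3)) y

lemma rpow_one_third_pow_three {x : ℝ} (hx : 0 ≤ x) : (x ^ ((1 : ℝ) / 3)) ^ 3 = x := by
  simpa using rpow_inv_natCast_pow hx (n := 3) (by norm_num)

lemma alpha_pos {x y : ℝ} (hx : 0 ≤ x) (hy : 0 ≤ y) (hxy : (x, y) ≠ 0) : 0 < alpha x y := by
  rcases hx.lt_or_eq with hx | rfl
  · exact (rpow_pos_of_pos hx _).trans_le (le_max_left _ _)
  · have hy : 0 < y := hy.lt_of_ne fun hy => hxy (by simp [← hy])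
    exact hy.trans_le (le_max_right _ _)

lemma alpha_zero_zero : alpha 0 0 = 0 := by
  simp [alpha]

lemma alpha_div {x y l : ℝ} (hx : 0 ≤ x) (hl : 0 < l) :
    alpha (x / l ^ 3) (y / l) = alpha x y / l := by
  have hcube : (x / l ^ 3) ^ ((1 : ℝ) / 3) = x ^ ((1 : ℝ) / 3) / l := by
    rw [div_rpow hx (by positivity), ← rpow_natCast l 3, ← rpow_mul hl.le]
    norm_num
  rw [alpha, alpha, hcube, max_div_div_right hl.le]

lemma continuous_alpha : Continuous fun p : ℝ × ℝ => alpha p.1 p.2 :=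
  ((continuous_rpow_const (by norm_num)).comp continuous_fst).max continuous_snd

lemma le_one_of_alpha_eq_one {x y : ℝ} (hx : 0 ≤ x) (h : alpha x y = 1) : x ≤ 1 ∧ y ≤ 1 := by
  refine ⟨?_, (le_max_right _ _).trans h.le⟩
  rw [← rpow_one_third_pow_three hx]
  exact pow_le_one₀ (by positivity) ((le_max_left _ _).trans h.le)

lemma isCompact_alpha_eq_one :
    IsCompact {p : ℝ × ℝ | p ∈ Ici 0 ×ˢ Ici 0 ∧ alpha p.1 p.2 = 1} := by
  have hclosed : IsClosed {p : ℝ × ℝ | p ∈ Ici 0 ×ˢ Ici 0 ∧ alpha p.1 p.2 = 1} :=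
    (isClosed_Ici.prod isClosed_Ici).inter (isClosed_eq continuous_alpha continuous_const)
  have hbox : IsCompact (Icc (0 : ℝ) 1 ×ˢ Icc (0 : ℝ) 1) := isCompact_Icc.prod isCompact_Icc
  refine hbox.of_isClosed_subset hclosed ?_
  rintro ⟨x, y⟩ ⟨⟨hx, hy⟩, h⟩
  obtain ⟨hx1, hy1⟩ := le_one_of_alpha_eq_one hx h
  exact ⟨⟨hx, hx1⟩, ⟨hy, hy1⟩⟩

lemma alpha_eq_one_cases {x y : ℝ} (hx : 0 ≤ x) (hy : 0 ≤ y) (h : alpha x y = 1) :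
    (0 < x ∧ 0 < y) ∨ (x = 1 ∧ y = 0) ∨ (x = 0 ∧ y = 1) := by
  rcases hx.lt_or_eq with hx | rfl
  · rcases hy.lt_or_eq with hy | rfl
    · exact Or.inl ⟨hx, hy⟩
    · have h3 : x ^ ((1 : ℝ) / 3) = 1 := by
        simpa [alpha, max_eq_left (rpow_nonneg hx.le _)] using h
      refine Or.inr (Or.inl ⟨?_, rfl⟩)
      rw [← rpow_one_third_pow_three hx.le, h3, one_pow]
  · simp only [alpha, zero_rpow (by norm_num : (1 : ℝ) / 3 ≠ 0), max_eq_right hy] at h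
    exact Or.inr (Or.inr ⟨rfl, h⟩)

theorem exists_bounds_sqrt_alpha_of_homogeneous {f : ℝ → ℝ → ℝ}
    (hcont : ContinuousOn (fun p : ℝ × ℝ => f p.1 p.2) (Ici 0 ×ˢ Ici 0))
    (hhom : ∀ l > 0, ∀ x y, 0 ≤ x → 0 ≤ y → f (l ^ 3 * x) (l * y) = √l * f x y)
    (hpos : ∀ x y, 0 ≤ x → 0 ≤ y → alpha x y = 1 → 0 < f x y) :
    ∃ c > 0, ∃ C > 0, ∀ x y, 0 ≤ x → 0 ≤ y →
      c * √(alpha x y) ≤ f x y ∧ f x y ≤ C * √(alpha x y) := by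
  set S := {p : ℝ × ℝ | p ∈ Ici 0 ×ˢ Ici 0 ∧ alpha p.1 p.2 = 1}
  have hS : S.Nonempty := ⟨(1, 0), by simp [S, alpha]⟩
  have hcontS : ContinuousOn (fun p : ℝ × ℝ => f p.1 p.2) S := hcont.mono fun _ hp => hp.1
  obtain ⟨pmin, ⟨⟨hpmin₁, hpmin₂⟩, hpmin⟩, hmin⟩ :=
    isCompact_alpha_eq_one.exists_isMinOn hS hcontS
  obtain ⟨pmax, ⟨⟨hpmax₁, hpmax₂⟩, hpmax⟩, hmax⟩ :=
    isCompact_alpha_eq_one.exists_isMaxOn hS hcontS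
  refine ⟨_, hpos _ _ hpmin₁ hpmin₂ hpmin, _, hpos _ _ hpmax₁ hpmax₂ hpmax,
    fun x y hx hy => ?_⟩
  by_cases hxy : (x, y) = 0
  · obtain ⟨rfl, rfl⟩ := Prod.mk_eq_zero.mp hxy
    have h00 : f 0 0 = 0 := by
      have h4 := hhom 4 (by norm_num) 0 0 le_rfl le_rfl
      rw [mul_zero, mul_zero, show √(4 : ℝ) = 2 by
        rw [show (4 : ℝ) = 2 ^ 2 by norm_num, sqrt_sq zero_le_two]] at h4
      linarith
    simp [h00, alpha_zero_zero]
  set l := alpha x y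
  have hl : 0 < l := alpha_pos hx hy hxy
  have hx' : 0 ≤ x / l ^ 3 := div_nonneg hx (by positivity)
  have hy' : 0 ≤ y / l := div_nonneg hy hl.le
  have hscaled : (x / l ^ 3, y / l) ∈ S :=
    ⟨⟨hx', hy'⟩, by rw [alpha_div hx hl, div_self hl.ne']⟩
  have hf : f x y = √l * f (x / l ^ 3) (y / l) := by
    rw [← hhom l hl _ _ hx' hy', mul_div_cancel₀ _ (by positivity), mul_div_cancel₀ _ hl.ne']
  rw [hf, mul_comm (√l) (f _ _)]
  exact ⟨mul_le_mul_of_nonneg_right (hmin hscaled) (sqrt_nonneg l),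
    mul_le_mul_of_nonneg_right (hmax hscaled) (sqrt_nonneg l)⟩

noncomputable def hFormula (U : ℝ → ℝ) (x y : ℝ) : ℝ :=
  (2 / 9 : ℝ) ^ ((1 : ℝ) / 6) * (y / x ^ ((1 : ℝ) / 6)) * U (2 * y ^ 3 / (9 * x))

variable {U : ℝ → ℝ}

lemma hFormula_pos (hU : ∀ s > 0, 0 < U s) {x y : ℝ} (hx : 0 < x) (hy : 0 < y) :
    0 < hFormula U x y := by
  have := hU (2 * y ^ 3 / (9 * x)) (by positivity)
  unfold hFormula
  positivity

lemma hFormula_dilation {l x : ℝ} (hl : 0 < l) (hx : 0 < x) (y : ℝ) :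
    hFormula U (l ^ 3 * x) (l * y) = √l * hFormula U x y := by
  have hpow : (l ^ 3 * x) ^ ((1 : ℝ) / 6) = √l * x ^ ((1 : ℝ) / 6) := by
    rw [mul_rpow (by positivity) hx.le, ← rpow_natCast l 3, ← rpow_mul hl.le, sqrt_eq_rpow]
    norm_num
  have hsqrt : l = √l * √l := (mul_self_sqrt hl.le).symm
  unfold hFormula
  rw [hpow, show 2 * (l * y) ^ 3 / (9 * (l ^ 3 * x)) = 2 * y ^ 3 / (9 * x) by
    field_simp]
  nth_rw 1 [hsqrt]
  field_simp

lemma tendsto_hFormula_one_nhdsGT_zero {L : ℝ}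
    (hU : Tendsto (fun s => U s * s ^ ((1 : ℝ) / 3)) (𝓝[>] 0) (𝓝 L)) :
    Tendsto (fun y => hFormula U 1 y) (𝓝[>] 0) (𝓝 ((9 / 2 : ℝ) ^ ((1 : ℝ) / 6) * L)) := by
  have hs : Tendsto (fun y : ℝ => 2 * y ^ 3 / 9) (𝓝[>] 0) (𝓝[>] 0) := by
    refine tendsto_nhdsWithin_of_tendsto_nhds_of_eventually_within _ ?_ ?_
    · simpa using ((by fun_prop : Continuous fun y : ℝ => 2 * y ^ 3 / 9).tendsto 0).mono_left
        nhdsWithin_le_nhds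
    · filter_upwards [self_mem_nhdsWithin] with y (hy : 0 < y)
      exact (by positivity : (0 : ℝ) < 2 * y ^ 3 / 9)
  refine ((hU.comp hs).const_mul _).congr' ?_
  filter_upwards [self_mem_nhdsWithin] with y (hy : 0 < y)
  have hcube : (2 * y ^ 3 / 9) ^ ((1 : ℝ) / 3) = (2 / 9 : ℝ) ^ ((1 : ℝ) / 3) * y := by
    rw [show 2 * y ^ 3 / 9 = 2 / 9 * y ^ 3 by ring, mul_rpow (by norm_num) (by positivity),
      ← rpow_natCast y 3, ← rpow_mul hy.le]
    norm_num
  have hconst : (9 / 2 : ℝ) ^ ((1 : ℝ) / 6) * (2 / 9 : ℝ) ^ ((1 : ℝ) / 3)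
      = (2 / 9 : ℝ) ^ ((1 : ℝ) / 6) := by
    rw [show (9 / 2 : ℝ) = (2 / 9)⁻¹ by norm_num, inv_rpow (by norm_num),
      ← rpow_neg (by norm_num), ← rpow_add (by norm_num)]
    norm_num
  simp only [Function.comp, hFormula, hcube, one_rpow, div_one, mul_one]
  linear_combination (U (2 * y ^ 3 / 9) * y) * hconst

lemma tendsto_hFormula_nhdsGT_zero_one {L : ℝ}
    (hU : Tendsto (fun s => U s * s ^ ((1 : ℝ) / 6)) atTop (𝓝 L)) :
    Tendsto (fun x => hFormula U x 1) (𝓝[>] 0) (𝓝 L) := by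
  have hs : Tendsto (fun x : ℝ => 2 / 9 * x⁻¹) (𝓝[>] 0) atTop :=
    tendsto_inv_nhdsGT_zero.const_mul_atTop (by norm_num)
  refine (hU.comp hs).congr' ?_
  filter_upwards [self_mem_nhdsWithin] with x (hx : 0 < x)
  simp only [Function.comp, hFormula, inv_rpow hx.le,
    mul_rpow (by norm_num : (0 : ℝ) ≤ 2 / 9) (inv_nonneg.mpr hx.le)]
  field_simp

lemma apply_zero_eq_of_tendsto_nhdsGT {f : ℝ → ℝ} {L : ℝ} (hf : ContinuousWithinAt f (Ici 0) 0)
    (hL : Tendsto f (𝓝[>] 0) (𝓝 L)) : f 0 = L :=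
  tendsto_nhds_unique (hf.mono Ioi_subset_Ici_self).tendsto hL

section Extension

variable {h : ℝ → ℝ → ℝ}
  (hcont : ContinuousOn (fun p : ℝ × ℝ => h p.1 p.2) (Ici 0 ×ˢ Ici 0))
  (hdef : ∀ x y, 0 < x → 0 < y → h x y = hFormula U x y)
include hcont hdef

lemma dilation_of_continuousOn {l : ℝ} (hl : 0 < l) {x y : ℝ} (hx : 0 ≤ x) (hy : 0 ≤ y) :
    h (l ^ 3 * x) (l * y) = √l * h x y := by
  have hmaps : MapsTo (fun p : ℝ × ℝ => (l ^ 3 * p.1, l * p.2))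
      (Ici (0 : ℝ) ×ˢ Ici (0 : ℝ)) (Ici 0 ×ˢ Ici 0) :=
    fun p ⟨hp₁, hp₂⟩ => ⟨mul_nonneg (pow_nonneg hl.le 3) hp₁, mul_nonneg hl.le hp₂⟩
  have heq : EqOn (fun p : ℝ × ℝ => h (l ^ 3 * p.1) (l * p.2)) (fun p => √l * h p.1 p.2)
      (Ioi 0 ×ˢ Ioi 0) := by
    rintro ⟨a, b⟩ ⟨ha, hb⟩
    simp only [mem_Ioi] at ha hb
    simp only [hdef _ _ ha hb, hdef _ _ (by positivity : 0 < l ^ 3 * a) (mul_pos hl hb),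
      hFormula_dilation hl ha]
  have hdense : Ici (0 : ℝ) ×ˢ Ici (0 : ℝ) ⊆ closure (Ioi 0 ×ˢ Ioi 0) := by
    rw [closure_prod_eq, closure_Ioi]
  exact heq.of_subset_closure (hcont.comp (by fun_prop) hmaps) (continuousOn_const.mul hcont)
    (prod_mono Ioi_subset_Ici_self Ioi_subset_Ici_self) hdense (show (x, y) ∈ _ from ⟨hx, hy⟩)

lemma apply_one_zero_eq {L : ℝ}
    (hU : Tendsto (fun s => U s * s ^ ((1 : ℝ) / 3)) (𝓝[>] 0) (𝓝 L)) :
    h 1 0 = (9 / 2 : ℝ) ^ ((1 : ℝ) / 6) * L := by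
  refine apply_zero_eq_of_tendsto_nhdsGT (f := fun y => h 1 y)
    ((hcont.comp (continuous_const.prodMk continuous_id).continuousOn
      fun y hy => ⟨mem_Ici.mpr zero_le_one, hy⟩) 0 self_mem_Ici)
    ((tendsto_hFormula_one_nhdsGT_zero hU).congr' ?_)
  filter_upwards [self_mem_nhdsWithin] with y hy
  exact (hdef 1 y one_pos hy).symm

lemma apply_zero_one_eq {L : ℝ} (hU : Tendsto (fun s => U s * s ^ ((1 : ℝ) / 6)) atTop (𝓝 L)) :
    h 0 1 = L := by
  refine apply_zero_eq_of_tendsto_nhdsGT (f := fun x => h x 1)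
    ((hcont.comp (continuous_id.prodMk continuous_const).continuousOn
      fun x hx => ⟨hx, mem_Ici.mpr zero_le_one⟩) 0 self_mem_Ici)
    ((tendsto_hFormula_nhdsGT_zero_one hU).congr' ?_)
  filter_upwards [self_mem_nhdsWithin] with x hx
  exact (hdef x 1 hx one_pos).symm

end Extension

end TwoSidedSqrtAlpha

open TwoSidedSqrtAlpha in
theorem h_two_sided_sqrt_alpha_bounds_general (U : ℝ → ℝ)
    (hUpos : ∀ s > (0 : ℝ), 0 < U s)
    (hUinf : Filter.Tendsto (fun s => U s * s ^ ((1 : ℝ) / 6)) Filter.atTop (nhds 1))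
    (hUzero : Filter.Tendsto (fun s => U s * s ^ ((1 : ℝ) / 3))
      (nhdsWithin 0 (Set.Ioi 0)) (nhds (Real.Gamma (1 / 3) / Real.Gamma (1 / 6))))
    (h : ℝ → ℝ → ℝ)
    (hcont : ContinuousOn (fun p : ℝ × ℝ => h p.1 p.2) (Set.Ici 0 ×ˢ Set.Ici 0))
    (hdef : ∀ x y : ℝ, 0 < x → 0 < y →
      h x y = (2 / 9 : ℝ) ^ ((1 : ℝ) / 6) * (y / x ^ ((1 : ℝ) / 6)) * U (2 * y ^ 3 / (9 * x))) :
    ∃ c > (0 : ℝ), ∃ C > (0 : ℝ), ∀ x y : ℝ, 0 ≤ x → 0 ≤ y →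
      c * Real.sqrt (max (|x| ^ ((1 : ℝ) / 3)) |y|) ≤ h x y ∧
      h x y ≤ C * Real.sqrt (max (|x| ^ ((1 : ℝ) / 3)) |y|) := by
  have hdef' : ∀ x y, 0 < x → 0 < y → h x y = hFormula U x y := hdef
  have hpos : ∀ x y, 0 ≤ x → 0 ≤ y → alpha x y = 1 → 0 < h x y := by
    intro x y hx hy hα
    rcases alpha_eq_one_cases hx hy hα with ⟨hx, hy⟩ | ⟨rfl, rfl⟩ | ⟨rfl, rfl⟩
    · exact hdef' x y hx hy ▸ hFormula_pos hUpos hx hy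
    · rw [apply_one_zero_eq hcont hdef' hUzero]
      have := Gamma_pos_of_pos (by norm_num : (0 : ℝ) < 1 / 3)
      have := Gamma_pos_of_pos (by norm_num : (0 : ℝ) < 1 / 6)
      positivity
    · rw [apply_zero_one_eq hcont hdef' hUinf]
      exact one_pos
  obtain ⟨c, hc, C, hC, hbounds⟩ := exists_bounds_sqrt_alpha_of_homogeneous hcont
    (fun l hl x y hx hy => dilation_of_continuousOn hcont hdef' hl hx hy) hpos
  refine ⟨c, hc, C, hC, fun x y hx hy => ?_⟩
  rw [abs_of_nonneg hx, abs_of_nonneg hy]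
  exact hbounds x y hx hy

/-- Define `α(x,y) = max(|x|^(1/3), |y|)`.  There exist positive constants `c` and
`C` such that `c √(α(x,y)) ≤ h(x,y) ≤ C √(α(x,y))` on `ℝ₊²`, where
`h(x,y) = (2/9)^(1/6)(y/x^(1/6)) U(2y³/(9x))` for `x, y > 0`, extended continuously
to the boundary of `ℝ₊²`.  Here `U = U(1/6, 4/3, ·)` is Tricomi's confluent
hypergeometric function: continuous and positive on `(0,∞)`, with
`U(s) ∼ s^(-1/6)` as `s → ∞` and `U(s) ∼ (Γ(1/3)/Γ(1/6)) s^(-1/3)` as `s → 0+`. -/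
theorem h_two_sided_sqrt_alpha_bounds (U : ℝ → ℝ)
    (hUcont : ContinuousOn U (Set.Ioi 0))
    (hUpos : ∀ s > (0 : ℝ), 0 < U s)
    (hUinf : Filter.Tendsto (fun s => U s * s ^ ((1 : ℝ) / 6)) Filter.atTop (nhds 1))
    (hUzero : Filter.Tendsto (fun s => U s * s ^ ((1 : ℝ) / 3))
      (nhdsWithin 0 (Set.Ioi 0)) (nhds (Real.Gamma (1 / 3) / Real.Gamma (1 / 6))))
    (h : ℝ → ℝ → ℝ)
    (hcont : ContinuousOn (fun p : ℝ × ℝ => h p.1 p.2) (Set.Ici 0 ×ˢ Set.Ici 0))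
    (hdef : ∀ x y : ℝ, 0 < x → 0 < y →
      h x y = (2 / 9 : ℝ) ^ ((1 : ℝ) / 6) * (y / x ^ ((1 : ℝ) / 6)) * U (2 * y ^ 3 / (9 * x))) :
    ∃ c > (0 : ℝ), ∃ C > (0 : ℝ), ∀ x y : ℝ, 0 ≤ x → 0 ≤ y →
      c * Real.sqrt (max (|x| ^ ((1 : ℝ) / 3)) |y|) ≤ h x y ∧
      h x y ≤ C * Real.sqrt (max (|x| ^ ((1 : ℝ) / 3)) |y|) :=
  h_two_sided_sqrt_alpha_bounds_general U hUpos hUinf hUzero h hcont hdef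
end

section
/- Let E X = 0, E X² = 1. Let M_n = max_{0 ≤ i ≤ n} |S_i| where S_i is the random walk started at y. For the chain Z_n = (S_n^{(2)}, S_n) started at z = (x,y) with x,y ≥ 0, if h satisfies 0 ≤ h(w) ≤ C √(α(w)) with α(x,y) = max(|x|^{1/3}, |y|), then E_z[h²(Z_n)] ≤ C' (1 + α(z)) n^{3/2} for all n ≥ 1 and a constant C' depending only on C and the law of X. -/
/-!
The gauge `α` is subadditive and `α w ≤ 1 + |w.1| + |w.2|`. Writing `W_j = S_j - y`,
the chain is `Z_n = z + (n y + ∑_{k ≤ n} W_k, W_n)`, hence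
`α(Z_n) ≤ (n + 1) α(z) + 1 + ∑_{k ≤ n} |W_k| + |W_n|`. Since `h² ≤ C² α` and
`E|W_k| ≤ √(E W_k²) = √k ≤ √n`, we get
`E h²(Z_n) ≤ C² ((n + 1) α(z) + 1 + (n + 1) √n) ≤ 3 C² (1 + α(z)) n^{3/2}`.
-/

open MeasureTheory ProbabilityTheory Finset

noncomputable def α (w : ℝ × ℝ) : ℝ := max (|w.1| ^ ((1 : ℝ) / 3)) |w.2|

lemma abs_add_rpow_le {p : ℝ} (hp : 0 ≤ p) (hp1 : p ≤ 1) (a b : ℝ) :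
    |a + b| ^ p ≤ |a| ^ p + |b| ^ p :=
  (Real.rpow_le_rpow (abs_nonneg _) (abs_add_le a b) hp).trans
    (Real.rpow_add_le_add_rpow (abs_nonneg a) (abs_nonneg b) hp hp1)

lemma rpow_le_one_add {p t : ℝ} (ht : 0 ≤ t) (hp : 0 ≤ p) (hp1 : p ≤ 1) :
    t ^ p ≤ 1 + t := by
  rcases le_total t 1 with h | h
  · linarith [Real.rpow_le_one ht h hp]
  · calc t ^ p ≤ t ^ (1 : ℝ) := Real.rpow_le_rpow_of_exponent_le h hp1
      _ ≤ 1 + t := by rw [Real.rpow_one]; linarith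

lemma α_add_le (v w : ℝ × ℝ) : α (v + w) ≤ α v + α w := by
  unfold α
  refine max_le ((abs_add_rpow_le (by norm_num) (by norm_num) v.1 w.1).trans ?_)
    ((abs_add_le v.2 w.2).trans ?_) <;>
  exact add_le_add (by simp) (by simp)

lemma α_nonneg (w : ℝ × ℝ) : 0 ≤ α w := (abs_nonneg _).trans (le_max_right _ _)

lemma abs_snd_le_α (w : ℝ × ℝ) : |w.2| ≤ α w := le_max_right _ _

lemma α_le_one_add (w : ℝ × ℝ) : α w ≤ 1 + |w.1| + |w.2| := by
  have := rpow_le_one_add (abs_nonneg w.1) (by norm_num : (0 : ℝ) ≤ 1 / 3) (by norm_num)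
  exact max_le (by linarith [abs_nonneg w.2]) (by linarith [abs_nonneg w.1])

lemma sq_le_mul_of_le_mul_sqrt {a b C : ℝ} (ha : 0 ≤ a) (hb : 0 ≤ b) (h : a ≤ C * √b) :
    a ^ 2 ≤ C ^ 2 * b := by
  simpa [mul_pow, Real.sq_sqrt hb] using pow_le_pow_left₀ ha h 2

lemma α_integratedWalk_le (x y : ℝ) (w : ℕ → ℝ) (n : ℕ) :
    α (x + ∑ k ∈ range n, (y + w (k + 1)), y + w n)
      ≤ (n + 1) * α (x, y) + 1 + (∑ k ∈ range n, |w (k + 1)| + |w n|) := by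
  have hsplit : (x + ∑ k ∈ range n, (y + w (k + 1)), y + w n)
      = (x, y) + (n * y + ∑ k ∈ range n, w (k + 1), w n) := by
    simp [sum_add_distrib]
  have hfst :
      |n * y + ∑ k ∈ range n, w (k + 1)| ≤ n * α (x, y) + ∑ k ∈ range n, |w (k + 1)| :=
    calc |n * y + ∑ k ∈ range n, w (k + 1)|
        ≤ n * |y| + ∑ k ∈ range n, |w (k + 1)| := by
          grw [abs_add_le, abs_mul, abs_sum_le_sum_abs, Nat.abs_cast]
      _ ≤ n * α (x, y) + ∑ k ∈ range n, |w (k + 1)| := by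
          gcongr; exact abs_snd_le_α (x, y)
  rw [hsplit]
  calc α ((x, y) + (n * y + ∑ k ∈ range n, w (k + 1), w n))
      ≤ α (x, y) + (1 + |n * y + ∑ k ∈ range n, w (k + 1)| + |w n|) :=
        (α_add_le _ _).trans (by gcongr; exact α_le_one_add _)
    _ ≤ _ := by linarith

lemma affine_le_mul_rpow_three_halves {a : ℝ} (ha : 0 ≤ a) {n : ℕ} (hn : 1 ≤ n) :
    (n + 1) * a + 1 + (n + 1) * √n ≤ 3 * (1 + a) * (n : ℝ) ^ ((3 : ℝ) / 2) := by
  have hn : (1 : ℝ) ≤ n := by exact_mod_cast hn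
  have hs : 1 ≤ √(n : ℝ) := Real.one_le_sqrt.2 hn
  have hns : (n : ℝ) ≤ n * √n := le_mul_of_one_le_right (by positivity) hs
  rw [show (3 : ℝ) / 2 = 1 + 1 / 2 by norm_num, Real.rpow_add (by positivity), Real.rpow_one,
    ← Real.sqrt_eq_rpow]
  nlinarith [mul_nonneg ha (sub_nonneg.2 hns), mul_nonneg ha (sub_nonneg.2 hn),
    mul_nonneg (sub_nonneg.2 hn) (zero_le_one.trans hs)]

section Moments

variable {Ω : Type*} [MeasurableSpace Ω] {μ : Measure Ω}

lemma integral_abs_le_sqrt_integral_sq [IsProbabilityMeasure μ] {f : Ω → ℝ}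
    (hf : MemLp f 2 μ) :
    ∫ ω, |f ω| ∂μ ≤ √(∫ ω, f ω ^ 2 ∂μ) := by
  refine Real.le_sqrt_of_sq_le ?_
  have := variance_nonneg |f| μ
  rw [variance_eq_sub hf.abs] at this
  simpa [sq_abs] using this

lemma integral_sq_sum_of_pairwise_indepFun [IsFiniteMeasure μ] {ι : Type*} {Y : ι → Ω → ℝ}
    {s : Finset ι} (hY : ∀ i ∈ s, MemLp (Y i) 2 μ) (hmean : ∀ i ∈ s, μ[Y i] = 0)
    (hind : Set.Pairwise ↑s fun i j => Y i ⟂ᵢ[μ] Y j) :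
    ∫ ω, (∑ i ∈ s, Y i ω) ^ 2 ∂μ = ∑ i ∈ s, ∫ ω, Y i ω ^ 2 ∂μ := by
  have hsum_mean : μ[∑ i ∈ s, Y i] = 0 := by
    simp only [Finset.sum_apply]
    rw [integral_finsetSum s fun i hi => (hY i hi).integrable one_le_two]
    exact sum_eq_zero hmean
  have hvar := IndepFun.variance_sum hY hind
  rw [variance_of_integral_eq_zero (memLp_finsetSum' s hY).aemeasurable hsum_mean] at hvar
  rw [sum_congr rfl fun i hi => variance_of_integral_eq_zero (hY i hi).aemeasurable (hmean i hi)]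
    at hvar
  simpa only [Finset.sum_apply] using hvar

end Moments

section RandomWalk

variable {Ω : Type*} [MeasurableSpace Ω] {μ : Measure Ω} {X : ℕ → Ω → ℝ}

def partialSum (X : ℕ → Ω → ℝ) (j : ℕ) (ω : Ω) : ℝ := ∑ i ∈ range j, X (i + 1) ω

lemma memLp_partialSum (hX1 : MemLp (X 1) 2 μ) (hXident : ∀ i, IdentDistrib (X i) (X 1) μ μ)
    (j : ℕ) : MemLp (partialSum X j) 2 μ :=
  memLp_finsetSum _ fun i _ => (hXident (i + 1)).memLp_iff.2 hX1

lemma integral_abs_partialSum_le_sqrt [IsProbabilityMeasure μ] (hX1 : MemLp (X 1) 2 μ)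
    (hXindep : iIndepFun X μ) (hXident : ∀ i, IdentDistrib (X i) (X 1) μ μ)
    (hmean : ∫ ω, X 1 ω ∂μ = 0) (hvar : ∫ ω, X 1 ω ^ 2 ∂μ = 1) (j : ℕ) :
    ∫ ω, |partialSum X j ω| ∂μ ≤ √j := by
  have hsq : ∀ i, ∫ ω, X i ω ^ 2 ∂μ = 1 := fun i =>
    ((hXident i).comp (measurable_id.pow_const 2)).integral_eq.trans hvar
  calc ∫ ω, |partialSum X j ω| ∂μ
      ≤ √(∫ ω, partialSum X j ω ^ 2 ∂μ) :=
        integral_abs_le_sqrt_integral_sq (memLp_partialSum hX1 hXident j)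
    _ = √j := by
        simp only [partialSum]
        rw [integral_sq_sum_of_pairwise_indepFun
          (fun i _ => (hXident (i + 1)).memLp_iff.2 hX1)
          (fun i _ => (hXident (i + 1)).integral_eq.trans hmean)
          (fun i _ k _ hik => hXindep.indepFun (by omega))]
        simp [hsq]

lemma integrable_abs_partialSum [IsFiniteMeasure μ] (hX1 : MemLp (X 1) 2 μ)
    (hXident : ∀ i, IdentDistrib (X i) (X 1) μ μ) (j : ℕ) :
    Integrable (fun ω => |partialSum X j ω|) μ :=
  ((memLp_partialSum hX1 hXident j).integrable one_le_two).abs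

lemma integrable_sum_abs_partialSum [IsFiniteMeasure μ] (hX1 : MemLp (X 1) 2 μ)
    (hXident : ∀ i, IdentDistrib (X i) (X 1) μ μ) (n : ℕ) :
    Integrable (fun ω => ∑ k ∈ range n, |partialSum X (k + 1) ω| + |partialSum X n ω|) μ :=
  (integrable_finsetSum _ fun k _ => integrable_abs_partialSum hX1 hXident (k + 1)).add
    (integrable_abs_partialSum hX1 hXident n)

lemma integral_sum_abs_partialSum_le [IsProbabilityMeasure μ] (hX1 : MemLp (X 1) 2 μ)
    (hXindep : iIndepFun X μ) (hXident : ∀ i, IdentDistrib (X i) (X 1) μ μ)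
    (hmean : ∫ ω, X 1 ω ∂μ = 0) (hvar : ∫ ω, X 1 ω ^ 2 ∂μ = 1) (n : ℕ) :
    ∫ ω, (∑ k ∈ range n, |partialSum X (k + 1) ω| + |partialSum X n ω|) ∂μ
      ≤ (n + 1) * √n := by
  have hW := integrable_abs_partialSum hX1 hXident
  have hle := integral_abs_partialSum_le_sqrt hX1 hXindep hXident hmean hvar
  rw [integral_add (integrable_finsetSum _ fun k _ => hW (k + 1)) (hW n),
    integral_finsetSum _ fun k _ => hW (k + 1)]
  calc ∑ k ∈ range n, ∫ ω, |partialSum X (k + 1) ω| ∂μ + ∫ ω, |partialSum X n ω| ∂μ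
      ≤ ∑ k ∈ range n, √n + √n :=
        add_le_add (sum_le_sum fun k hk => (hle _).trans
          (Real.sqrt_le_sqrt (by exact_mod_cast mem_range.1 hk))) (hle n)
    _ = (n + 1) * √n := by rw [sum_const, card_range, nsmul_eq_mul]; ring

end RandomWalk

theorem second_moment_bound_h_general
    {Ω : Type*} [MeasurableSpace Ω] (μ : Measure Ω) [IsProbabilityMeasure μ]
    (X : ℕ → Ω → ℝ) (hXmeas : ∀ i, Measurable (X i))
    (hXindep : iIndepFun X μ)
    (hXident : ∀ i, IdentDistrib (X i) (X 1) μ μ)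
    (hmean : (∫ ω, X 1 ω ∂μ) = 0)
    (hint2 : Integrable (fun ω => (X 1 ω) ^ 2) μ) (hvar : (∫ ω, (X 1 ω) ^ 2 ∂μ) = 1)
    (C : ℝ) (hC : 0 < C) (h : ℝ × ℝ → ℝ)
    (hh : ∀ w : ℝ × ℝ,
      0 ≤ h w ∧ h w ≤ C * Real.sqrt (max (|w.1| ^ ((1 : ℝ) / 3)) |w.2|)) :
    ∃ C' : ℝ, 0 < C' ∧ ∀ x y : ℝ, 0 ≤ x → 0 ≤ y → ∀ n : ℕ, 1 ≤ n →
      (∫ ω, (h (x + ∑ k ∈ Finset.range n, (y + ∑ i ∈ Finset.range (k + 1), X (i + 1) ω),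
                y + ∑ i ∈ Finset.range n, X (i + 1) ω)) ^ 2 ∂μ)
        ≤ C' * (1 + max (|x| ^ ((1 : ℝ) / 3)) |y|) * (n : ℝ) ^ ((3 : ℝ) / 2) := by
  have hX1 : MemLp (X 1) 2 μ :=
    (memLp_two_iff_integrable_sq (hXmeas 1).aestronglyMeasurable).2 hint2
  refine ⟨3 * C ^ 2, by positivity, fun x y _ _ n hn => ?_⟩
  set D : Ω → ℝ := fun ω => ∑ k ∈ range n, |partialSum X (k + 1) ω| + |partialSum X n ω|
  have hD_int : Integrable D μ := integrable_sum_abs_partialSum hX1 hXident n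
  have hpointwise (ω : Ω) :
      h (x + ∑ k ∈ range n, (y + partialSum X (k + 1) ω), y + partialSum X n ω) ^ 2
        ≤ C ^ 2 * ((n + 1) * α (x, y) + 1 + D ω) :=
    (sq_le_mul_of_le_mul_sqrt (b := α _) (hh _).1 (α_nonneg _) (hh _).2).trans
      (by gcongr; exact α_integratedWalk_le x y (partialSum X · ω) n)
  calc ∫ ω, h (x + ∑ k ∈ range n, (y + partialSum X (k + 1) ω), y + partialSum X n ω) ^ 2 ∂μ
      ≤ ∫ ω, C ^ 2 * ((n + 1) * α (x, y) + 1 + D ω) ∂μ :=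
        integral_mono_of_nonneg (ae_of_all _ fun _ => sq_nonneg _)
          (((integrable_const _).add hD_int).const_mul _) (ae_of_all _ hpointwise)
    _ = C ^ 2 * ((n + 1) * α (x, y) + 1 + ∫ ω, D ω ∂μ) := by
        rw [integral_const_mul, integral_add (integrable_const _) hD_int, integral_const]
        simp
    _ ≤ C ^ 2 * ((n + 1) * α (x, y) + 1 + (n + 1) * √n) := by
        gcongr
        exact integral_sum_abs_partialSum_le hX1 hXindep hXident hmean hvar n
    _ ≤ 3 * C ^ 2 * (1 + α (x, y)) * (n : ℝ) ^ ((3 : ℝ) / 2) :=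
        (mul_le_mul_of_nonneg_left (affine_le_mul_rpow_three_halves (α_nonneg _) hn)
          (sq_nonneg C)).trans_eq (by ring)

/-- Let `E X = 0`, `E X² = 1` and let `Z_n = (S_n⁽²⁾, S_n)` be the integrated
random walk chain started at `z = (x, y)` with `x, y ≥ 0`.  If `h` satisfies
`0 ≤ h(w) ≤ C √(α(w))` with `α(x,y) = max(|x|^{1/3}, |y|)`, then
`E_z[h²(Z_n)] ≤ C' (1 + α(z)) n^{3/2}` for all `n ≥ 1` and a constant `C'`
depending only on `C` and the law of `X`. -/
theorem second_moment_bound_h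
    {Ω : Type*} [MeasurableSpace Ω] (μ : Measure Ω) [IsProbabilityMeasure μ]
    (X : ℕ → Ω → ℝ) (hXmeas : ∀ i, Measurable (X i))
    (hXindep : iIndepFun X μ)
    (hXident : ∀ i, IdentDistrib (X i) (X 1) μ μ)
    (hint : Integrable (X 1) μ) (hmean : (∫ ω, X 1 ω ∂μ) = 0)
    (hint2 : Integrable (fun ω => (X 1 ω) ^ 2) μ) (hvar : (∫ ω, (X 1 ω) ^ 2 ∂μ) = 1)
    (C : ℝ) (hC : 0 < C) (h : ℝ × ℝ → ℝ)
    (hh : ∀ w : ℝ × ℝ,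
      0 ≤ h w ∧ h w ≤ C * Real.sqrt (max (|w.1| ^ ((1 : ℝ) / 3)) |w.2|)) :
    ∃ C' : ℝ, 0 < C' ∧ ∀ x y : ℝ, 0 ≤ x → 0 ≤ y → ∀ n : ℕ, 1 ≤ n →
      (∫ ω, (h (x + ∑ k ∈ Finset.range n, (y + ∑ i ∈ Finset.range (k + 1), X (i + 1) ω),
                y + ∑ i ∈ Finset.range n, X (i + 1) ω)) ^ 2 ∂μ)
        ≤ C' * (1 + max (|x| ^ ((1 : ℝ) / 3)) |y|) * (n : ℝ) ^ ((3 : ℝ) / 2) :=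
  second_moment_bound_h_general μ X hXmeas hXindep hXident hmean hint2 hvar C hC h hh
end
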